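/- Let J : ℝ → ℝ be continuous, bounded below, with a unique global minimizer U*, and suppose J is coercive (J(W) → ∞ as |W| → ∞) so that exp(−J/ε) is integrable for all ε > 0. Then the Gibbs measures with densities proportional to exp(−J(W)/ε) converge weakly to the Dirac measure at U* as ε → 0⁺. -/

import Mathlib

open Real MeasureTheory Filter Topology Set

/-- Weak convergence of the Gibbs measures with densities ∝ exp(−J/ε) to the Dirac
measure at the unique global minimizer, tested against bounded continuous functions. -/
theorem gibbs_concentration (J : ℝ → ℝ) (Ustar : ℝ)
    (hcont : Continuous J) (hbdd : BddBelow (Set.range J))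
    (hmin : ∀ W : ℝ, W ≠ Ustar → J Ustar < J W)
    (hcoer : Tendsto J (cocompact ℝ) atTop)
    (hint : ∀ ε : ℝ, 0 < ε → Integrable (fun W : ℝ => Real.exp (-(J W) / ε))) :
    ∀ φ : ℝ → ℝ, Continuous φ → (∃ M, ∀ x, |φ x| ≤ M) →
      Tendsto (fun ε : ℝ =>
          (∫ W : ℝ, φ W * Real.exp (-(J W) / ε)) /
          (∫ W : ℝ, Real.exp (-(J W) / ε)))
        (𝓝[>] 0) (𝓝 (φ Ustar)) := by
  rintro φ hφ ⟨M, hM⟩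
  set c := φ Ustar with hc
  set J0 := J Ustar with hJ0
  have hM0 : 0 ≤ M := (abs_nonneg _).trans (hM Ustar)
  -- integrability at ε = 1
  have hC1 : Integrable (fun W => Real.exp (-J W)) := by
    simpa using hint 1 one_pos
  set C := ∫ W, Real.exp (-J W) with hCdef
  have hC0 : 0 ≤ C := integral_nonneg fun _ => (Real.exp_pos _).le
  rw [Metric.tendsto_nhds]
  intro σ hσ
  -- δ from continuity of φ at Ustar
  obtain ⟨δ, hδ0, hδ⟩ := Metric.continuousAt_iff.mp (hφ.continuousAt (x := Ustar)) (σ / 2) (half_pos hσ)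
  -- m : gap of J outside the δ-ball
  obtain ⟨m, hm0, hm⟩ : ∃ m > 0, ∀ x, δ ≤ dist x Ustar → J0 + m ≤ J x := by
    obtain ⟨K, hK, hKs⟩ : ∃ K : Set ℝ, IsCompact K ∧ ∀ x ∉ K, J0 + 1 ≤ J x := by
      have h := (hasBasis_cocompact.tendsto_iff atTop_basis).mp hcoer (J0 + 1) trivial
      obtain ⟨K, hK, h⟩ := h
      exact ⟨K, hK, fun x hx => h x hx⟩
    set T := K ∩ {x : ℝ | δ ≤ dist x Ustar} with hT
    have hTc : IsCompact T :=
      hK.inter_right (isClosed_le continuous_const ((continuous_id.dist continuous_const)))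
    rcases T.eq_empty_or_nonempty with hTe | hTne
    · refine ⟨1, one_pos, fun x hx => ?_⟩
      have hxK : x ∉ K := by
        intro h
        have : x ∈ T := ⟨h, hx⟩
        simp [hTe] at this
      exact hKs x hxK
    · obtain ⟨w, hwT, hwmin⟩ := hTc.exists_isMinOn hTne hcont.continuousOn
      have hwne : w ≠ Ustar := by
        intro h
        have := hwT.2
        simp [h] at this
        linarith
      have hw : J0 < J w := hmin w hwne
      refine ⟨min (J w - J0) 1, lt_min (by linarith) one_pos, fun x hx => ?_⟩
      by_cases hxK : x ∈ K
      · have h1 : J w ≤ J x := hwmin ⟨hxK, hx⟩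
        have h2 : min (J w - J0) 1 ≤ J w - J0 := min_le_left _ _
        linarith
      · have h1 := hKs x hxK
        have h2 : min (J w - J0) 1 ≤ 1 := min_le_right _ _
        linarith
  -- δ' from continuity of J at Ustar
  obtain ⟨δ', hδ'0, hδ'⟩ : ∃ δ' > 0, ∀ x : ℝ, dist x Ustar < δ' → J x ≤ J0 + m / 4 := by
    obtain ⟨d, hd0, hd⟩ := Metric.continuousAt_iff.mp (hcont.continuousAt (x := Ustar)) (m / 4) (by linarith)
    refine ⟨d, hd0, fun x hx => ?_⟩
    have := hd hx
    rw [Real.dist_eq, abs_sub_lt_iff] at this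
    linarith [this.1]
  -- the tail bound function g and its convergence to 0
  set g : ℝ → ℝ := fun ε => (M * C / δ') * Real.exp ((J0 + m) - (3 * m / 4) / ε) with hg
  have htend : Tendsto g (𝓝[>] (0:ℝ)) (𝓝 0) := by
    have h1 : Tendsto (fun ε : ℝ => (3 * m / 4) * ε⁻¹) (𝓝[>] (0:ℝ)) atTop :=
      Tendsto.const_mul_atTop (by linarith) tendsto_inv_nhdsGT_zero
    have h2 : Tendsto (fun ε : ℝ => (J0 + m) - (3 * m / 4) / ε) (𝓝[>] (0:ℝ)) atBot := by
      have h3 : Tendsto (fun ε : ℝ => -((3 * m / 4) * ε⁻¹)) (𝓝[>] (0:ℝ)) atBot :=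
        tendsto_neg_atTop_atBot.comp h1
      have h4 := tendsto_atBot_add_const_left _ (J0 + m) h3
      simpa [div_eq_mul_inv, sub_eq_add_neg] using h4
    have h5 : Tendsto (fun ε : ℝ => Real.exp ((J0 + m) - (3 * m / 4) / ε)) (𝓝[>] (0:ℝ)) (𝓝 0) :=
      Real.tendsto_exp_atBot.comp h2
    have h6 := h5.const_mul (M * C / δ')
    simpa [hg] using h6
  have hgev : ∀ᶠ ε in 𝓝[>] (0:ℝ), g ε < σ / 2 := htend.eventually (gt_mem_nhds (half_pos hσ))
  have hIoc : Ioc (0:ℝ) 1 ∈ 𝓝[>] (0:ℝ) := Ioc_mem_nhdsGT_of_mem (by constructor <;> norm_num)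
  filter_upwards [hIoc, hgev] with ε hε hgε
  obtain ⟨hε0, hε1⟩ := hε
  have hεne : ε ≠ 0 := ne_of_gt hε0
  -- basic objects for this ε
  have hIE : Integrable (fun W => Real.exp (-(J W) / ε)) := hint ε hε0
  have hEpos : ∀ W, (0:ℝ) < Real.exp (-(J W) / ε) := fun W => Real.exp_pos _
  set D := ∫ W, Real.exp (-(J W) / ε) with hD
  set B := Real.exp ((1 - 1 / ε) * (J0 + m)) with hB
  have hBpos : 0 < B := Real.exp_pos _
  -- denominator lower bound
  have hDlow : 2 * δ' * Real.exp (-(J0 + m / 4) / ε) ≤ D := by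
    have h1 : Real.exp (-(J0 + m / 4) / ε) * (volume (Metric.ball Ustar δ')).toReal
        ≤ ∫ W in Metric.ball Ustar δ', Real.exp (-(J W) / ε) := by
      refine setIntegral_ge_of_const_le_real measurableSet_ball ?_ ?_ hIE.integrableOn
      · rw [Real.volume_ball]; exact ENNReal.ofReal_ne_top
      · intro x hx
        have hx' : J x ≤ J0 + m / 4 := hδ' x (by simpa [Metric.mem_ball] using hx)
        apply Real.exp_le_exp.mpr
        gcongr
    have h2 : ∫ W in Metric.ball Ustar δ', Real.exp (-(J W) / ε) ≤ D :=
      setIntegral_le_integral hIE (ae_of_all _ fun W => (hEpos W).le)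
    rw [Real.volume_ball, ENNReal.toReal_ofReal (by positivity)] at h1
    nlinarith [Real.exp_pos (-(J0 + m / 4) / ε)]
  have hDpos : 0 < D := lt_of_lt_of_le (by positivity) hDlow
  -- bounds on |φ - c|
  have hφm : ∀ W, |φ W - c| ≤ 2 * M := fun W => by
    calc |φ W - c| ≤ |φ W| + |c| := abs_sub _ _
      _ ≤ M + M := add_le_add (hM W) (hM Ustar)
      _ = 2 * M := by ring
  have hIN : Integrable (fun W => (φ W - c) * Real.exp (-(J W) / ε)) :=
    hIE.bdd_mul ((hφ.sub continuous_const).aestronglyMeasurable)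
      (ae_of_all _ fun x => by rw [Real.norm_eq_abs]; exact hφm x)
  have hIφE : Integrable (fun W => φ W * Real.exp (-(J W) / ε)) :=
    hIE.bdd_mul hφ.aestronglyMeasurable (ae_of_all _ fun x => by rw [Real.norm_eq_abs]; exact hM x)
  -- numerator identity
  have hnum : (∫ W, φ W * Real.exp (-(J W) / ε)) - c * D
      = ∫ W, (φ W - c) * Real.exp (-(J W) / ε) := by
    rw [hD, ← integral_const_mul, ← integral_sub hIφE (hIE.const_mul c)]
    congr 1; ext W; ring
  -- pointwise tail bound
  have key : ∀ x, δ ≤ dist x Ustar → Real.exp (-(J x) / ε) ≤ B * Real.exp (-J x) := by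
    intro x hx
    have hJx := hm x hx
    rw [hB, ← Real.exp_add]
    apply Real.exp_le_exp.mpr
    have h1ε : 1 - 1 / ε ≤ 0 := by
      have : 1 ≤ 1 / ε := by rw [le_div_iff₀ hε0]; linarith
      linarith
    have h2 := mul_le_mul_of_nonpos_right hJx h1ε
    have hrw : -(J x) / ε = J x * (1 - 1 / ε) + -(J x) := by field_simp; ring
    rw [hrw]
    linarith
  set A := Metric.ball Ustar δ with hA
  -- bound on A
  have habsA : ∫ W in A, |(φ W - c) * Real.exp (-(J W) / ε)| ≤ σ / 2 * D := by
    have h1 : ∫ W in A, |(φ W - c) * Real.exp (-(J W) / ε)|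
        ≤ ∫ W in A, σ / 2 * Real.exp (-(J W) / ε) := by
      refine setIntegral_mono_on hIN.abs.integrableOn ((hIE.const_mul _).integrableOn)
        measurableSet_ball fun x hx => ?_
      rw [abs_mul, abs_of_pos (hEpos x)]
      apply mul_le_mul_of_nonneg_right _ (hEpos x).le
      have := hδ (by simpa [hA, Metric.mem_ball] using hx)
      rw [Real.dist_eq] at this
      exact this.le
    have h2 : ∫ W in A, σ / 2 * Real.exp (-(J W) / ε) ≤ σ / 2 * D := by
      rw [integral_const_mul]
      exact mul_le_mul_of_nonneg_left
        (setIntegral_le_integral hIE (ae_of_all _ fun W => (hEpos W).le)) (half_pos hσ).le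
    linarith
  -- bound on Aᶜ
  have habsAc : ∫ W in Aᶜ, |(φ W - c) * Real.exp (-(J W) / ε)| ≤ 2 * M * B * C := by
    have hint2 : Integrable (fun W => 2 * M * B * Real.exp (-J W)) := hC1.const_mul _
    have h1 : ∫ W in Aᶜ, |(φ W - c) * Real.exp (-(J W) / ε)|
        ≤ ∫ W in Aᶜ, 2 * M * B * Real.exp (-J W) := by
      refine setIntegral_mono_on hIN.abs.integrableOn hint2.integrableOn
        measurableSet_ball.compl fun x hx => ?_
      have hxd : δ ≤ dist x Ustar := by
        simpa [hA, Metric.mem_ball, not_lt] using hx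
      rw [abs_mul, abs_of_pos (hEpos x)]
      calc |φ x - c| * Real.exp (-(J x) / ε)
          ≤ (2 * M) * (B * Real.exp (-J x)) :=
            mul_le_mul (hφm x) (key x hxd) (hEpos x).le (by linarith)
        _ = 2 * M * B * Real.exp (-J x) := by ring
    have h2 : ∫ W in Aᶜ, 2 * M * B * Real.exp (-J W) ≤ ∫ W, 2 * M * B * Real.exp (-J W) :=
      setIntegral_le_integral hint2 (ae_of_all _ fun W => by positivity)
    have h3 : ∫ W, 2 * M * B * Real.exp (-J W) = 2 * M * B * C := integral_const_mul _ _
    linarith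
  -- combine
  have hsplit : ∫ W, |(φ W - c) * Real.exp (-(J W) / ε)|
      = (∫ W in A, |(φ W - c) * Real.exp (-(J W) / ε)|)
        + ∫ W in Aᶜ, |(φ W - c) * Real.exp (-(J W) / ε)| :=
    (integral_add_compl measurableSet_ball hIN.abs).symm
  have habs : |∫ W, (φ W - c) * Real.exp (-(J W) / ε)| ≤ σ / 2 * D + 2 * M * B * C := by
    calc |∫ W, (φ W - c) * Real.exp (-(J W) / ε)|
        ≤ ∫ W, |(φ W - c) * Real.exp (-(J W) / ε)| := by
          have h := norm_integral_le_integral_norm (μ := (volume : Measure ℝ))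
            (fun W => (φ W - c) * Real.exp (-(J W) / ε))
          simpa only [Real.norm_eq_abs] using h
      _ ≤ σ / 2 * D + 2 * M * B * C := by rw [hsplit]; linarith
  -- the tail term is at most g ε
  have htail : 2 * M * B * C / D ≤ g ε := by
    have hgeq : g ε = 2 * M * B * C / (2 * δ' * Real.exp (-(J0 + m / 4) / ε)) := by
      show (M * C / δ') * Real.exp ((J0 + m) - (3 * m / 4) / ε)
        = 2 * M * B * C / (2 * δ' * Real.exp (-(J0 + m / 4) / ε))
      have hexp : (J0 + m) - (3 * m / 4) / ε
          = (1 - 1 / ε) * (J0 + m) - (-(J0 + m / 4) / ε) := by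
        field_simp; ring
      rw [hexp, Real.exp_sub, ← hB]
      field_simp
    rw [hgeq]
    apply div_le_div_of_nonneg_left (by positivity) (by positivity) hDlow
  -- finish
  have hRdiff : (∫ W, φ W * Real.exp (-(J W) / ε)) / D - c
      = (∫ W, (φ W - c) * Real.exp (-(J W) / ε)) / D := by
    rw [← hnum]
    field_simp
  rw [Real.dist_eq, hRdiff, abs_div, abs_of_pos hDpos]
  have h1 : |∫ W, (φ W - c) * Real.exp (-(J W) / ε)| / D
      ≤ (σ / 2 * D + 2 * M * B * C) / D := by gcongr
  have h2 : (σ / 2 * D + 2 * M * B * C) / D = σ / 2 + 2 * M * B * C / D := by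
    field_simp
  linarith
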